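/- Nuclear norm subgradient inequality with certificate: Let Y* ∈ ℝ^{n×n} be symmetric positive semidefinite, let C be the orthogonal projection matrix onto the column space of Y*, and let W ∈ ℝ^{n×n} satisfy ‖W‖ ≤ 1 (spectral norm) and P_T(W) := CW + WC − CWC = 0. Then for every Y ∈ ℝ^{n×n}, ‖Y‖_* − ‖Y*‖_* ≥ ⟨C + W, Y − Y*⟩, where ⟨M, N⟩ = Σ_{i,j} m_{ij} n_{ij} is the Frobenius (trace) inner product. -/

import Mathlib

/-!
By duality, `tr (Aᵀ Y) ≤ ‖A‖ ‖Y‖_*`: expand the trace in an orthonormal eigenbasis `(bᵢ)` of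
`YᵀY`, so that `tr (Aᵀ Y) = ∑ ⟪A bᵢ, Y bᵢ⟫ ≤ ‖A‖ ∑ ‖Y bᵢ‖` and `‖Y bᵢ‖ = √λᵢ` are the singular
values of `Y`. The condition `P_T(W) = 0` with `C² = C` forces `CW = WC = 0`; then for every `x`
the vector `(C + W) x = C x + W (x - C x)` is an orthogonal sum, and `‖C + W‖ ≤ 1`. Hence
`⟨C + W, Y⟩ ≤ ‖Y‖_*` for every `Y`, while `⟨C + W, Y*⟩ = tr (C Y*) + tr (Wᵀ C Y*) = tr Y* = ‖Y*‖_*`,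
because `C` fixes the range of `Y*` and `√(Y*²) = Y*` for positive semidefinite `Y*`.
-/

/-- Nuclear norm: trace of the positive semidefinite square root of `Yᵀ Y`
(equivalently, the sum of the singular values of `Y`). -/
noncomputable def nuclearNorm {n : ℕ} (Y : Matrix (Fin n) (Fin n) ℝ) : ℝ :=
  ((Matrix.posSemidef_conjTranspose_mul_self Y).isHermitian.eigenvectorUnitary.1 *
    Matrix.diagonal (Real.sqrt ∘
      (Matrix.posSemidef_conjTranspose_mul_self Y).isHermitian.eigenvalues) *
    (star (Matrix.posSemidef_conjTranspose_mul_self Y).isHermitian.eigenvectorUnitary :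
      Matrix (Fin n) (Fin n) ℝ)).trace

/-- Spectral norm (largest singular value), as operator norm on Euclidean space. -/
noncomputable def specNorm {n : ℕ} (W : Matrix (Fin n) (Fin n) ℝ) : ℝ :=
  ‖LinearMap.toContinuousLinearMap (Matrix.toEuclideanLin W)‖

open Matrix
open scoped InnerProductSpace

theorem IsIdempotentElem.mul_eq_zero_and_mul_eq_zero {R : Type*} [Ring R] {c w : R}
    (hc : IsIdempotentElem c) (h : c * w + w * c - c * w * c = 0) :
    c * w = 0 ∧ w * c = 0 := by
  constructor
  · simpa [mul_add, mul_sub, ← mul_assoc, hc.eq] using congrArg (c * ·) h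
  · simpa [add_mul, sub_mul, mul_assoc, hc.eq] using congrArg (· * c) h

theorem LinearMap.IsSymmetric.norm_add_apply_le {𝕜 E : Type*} [RCLike 𝕜] [NormedAddCommGroup E]
    [InnerProductSpace 𝕜 E] {P Q : E →ₗ[𝕜] E} (hP : P.IsSymmetric) (hPP : ∀ x, P (P x) = P x)
    (hPQ : ∀ x, P (Q x) = 0) (hQP : ∀ x, Q (P x) = 0) (hQ : ∀ x, ‖Q x‖ ≤ ‖x‖) (x : E) :
    ‖(P + Q) x‖ ≤ ‖x‖ := by
  have hQx : Q x = Q (x - P x) := by rw [map_sub, hQP, sub_zero]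
  have h_image : ⟪P x, Q (x - P x)⟫_𝕜 = 0 := by rw [hP, hPQ, inner_zero_right]
  have h_split : ⟪P x, x - P x⟫_𝕜 = 0 := by rw [inner_sub_right, ← hP, hPP, sub_self]
  have h_norm_x : ‖x‖ * ‖x‖ = ‖P x‖ * ‖P x‖ + ‖x - P x‖ * ‖x - P x‖ := by
    simpa using norm_add_sq_eq_norm_sq_add_norm_sq_of_inner_eq_zero _ _ h_split
  rw [LinearMap.add_apply, hQx, mul_self_le_mul_self_iff (norm_nonneg _) (norm_nonneg _),
    norm_add_sq_eq_norm_sq_add_norm_sq_of_inner_eq_zero _ _ h_image, h_norm_x]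
  gcongr <;> exact hQ _

namespace Matrix

theorem mul_eq_self_of_range_le {m R : Type*} [Fintype m] [DecidableEq m] [CommRing R]
    {C B : Matrix m m R} (hC : C * C = C)
    (h : LinearMap.range B.mulVecLin ≤ LinearMap.range C.mulVecLin) : C * B = B := by
  refine toLin'.injective (LinearMap.ext fun v => ?_)
  obtain ⟨w, hw⟩ := h ⟨v, rfl⟩
  rw [mulVecLin_apply, mulVecLin_apply] at hw
  rw [toLin'_apply, toLin'_apply, ← mulVec_mulVec, ← hw, mulVec_mulVec, hC]

theorem sum_sum_mul_eq_trace_transpose_mul {m k R : Type*} [Fintype m] [Fintype k]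
    [CommSemiring R] (A B : Matrix m k R) : ∑ i, ∑ j, A i j * B i j = (Aᵀ * B).trace := by
  simp only [trace, diag_apply, mul_apply, transpose_apply]
  exact Finset.sum_comm

section EuclideanSpace

variable {m ι 𝕜 : Type*} [RCLike 𝕜] [Fintype m] [DecidableEq m] [Fintype ι]

theorem trace_eq_sum_inner_toEuclideanLin (M : Matrix m m 𝕜)
    (b : OrthonormalBasis ι 𝕜 (EuclideanSpace 𝕜 m)) :
    M.trace = ∑ i, ⟪b i, toEuclideanLin M (b i)⟫_𝕜 := by
  rw [← LinearMap.trace_eq_sum_inner (toEuclideanLin M) b, toEuclideanLin_eq_toLin_orthonormal,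
    trace_toLin_eq]

theorem trace_conjTranspose_mul_eq_sum_inner (A B : Matrix m m 𝕜)
    (b : OrthonormalBasis ι 𝕜 (EuclideanSpace 𝕜 m)) :
    (Aᴴ * B).trace = ∑ i, ⟪toEuclideanLin A (b i), toEuclideanLin B (b i)⟫_𝕜 := by
  rw [trace_eq_sum_inner_toEuclideanLin _ b]
  congr! 1 with i
  rw [toLpLin_mul_same, LinearMap.comp_apply, toEuclideanLin_conjTranspose_eq_adjoint,
    LinearMap.adjoint_inner_right]

theorem IsHermitian.trace_cfc {A : Matrix m m 𝕜} (hA : A.IsHermitian) (f : ℝ → ℝ) :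
    (cfc f A).trace = ∑ i, (f (hA.eigenvalues i) : 𝕜) := by
  rw [hA.cfc_eq, IsHermitian.cfc, Unitary.conjStarAlgAut_apply, trace_mul_cycle,
    UnitaryGroup.star_mul_self, one_mul, trace_diagonal]
  rfl

end EuclideanSpace

variable {m : Type*} [Fintype m] [DecidableEq m]

theorem norm_toEuclideanLin_eigenvectorBasis_conjTranspose_mul_self (Y : Matrix m m ℝ) (i : m) :
    ‖toEuclideanLin Y ((posSemidef_conjTranspose_mul_self Y).isHermitian.eigenvectorBasis i)‖ =
      √((posSemidef_conjTranspose_mul_self Y).isHermitian.eigenvalues i) := by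
  set hH := (posSemidef_conjTranspose_mul_self Y).isHermitian
  set b := hH.eigenvectorBasis
  have h_eigen : toEuclideanLin (Yᴴ * Y) (b i) = hH.eigenvalues i • b i := by
    ext1 j
    exact congrFun (hH.mulVec_eigenvectorBasis i) j
  rw [← Real.sqrt_sq (norm_nonneg _), ← real_inner_self_eq_norm_sq,
    ← LinearMap.adjoint_inner_right, ← toEuclideanLin_conjTranspose_eq_adjoint,
    ← LinearMap.comp_apply, ← toLpLin_mul_same, h_eigen, inner_smul_right,
    real_inner_self_eq_norm_sq, b.norm_eq_one, one_pow, mul_one]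

theorem PosSemidef.cfc_sqrt_sq {A : Matrix m m ℝ} (hA : A.PosSemidef) :
    cfc Real.sqrt (A ^ 2) = A := by
  have h_spectrum : ∀ x ∈ spectrum ℝ A, 0 ≤ x := by
    rintro x hx
    obtain ⟨i, rfl⟩ := hA.isHermitian.spectrum_real_eq_range_eigenvalues ▸ hx
    exact hA.eigenvalues_nonneg i
  rw [← cfc_comp_pow Real.sqrt 2 A Real.continuous_sqrt.continuousOn
      hA.isHermitian.isSelfAdjoint, cfc_congr fun x hx => Real.sqrt_sq (h_spectrum x hx),
    cfc_id' ℝ A hA.isHermitian.isSelfAdjoint]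

end Matrix

section NuclearNorm

variable {n : ℕ}

theorem norm_toEuclideanLin_apply_le (A : Matrix (Fin n) (Fin n) ℝ)
    (x : EuclideanSpace ℝ (Fin n)) : ‖toEuclideanLin A x‖ ≤ specNorm A * ‖x‖ :=
  (toEuclideanLin A).toContinuousLinearMap.le_opNorm x

theorem trace_transpose_mul_le_specNorm_mul {ι : Type*} [Fintype ι]
    (A Y : Matrix (Fin n) (Fin n) ℝ) (b : OrthonormalBasis ι ℝ (EuclideanSpace ℝ (Fin n))) :
    (Aᵀ * Y).trace ≤ specNorm A * ∑ i, ‖toEuclideanLin Y (b i)‖ := by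
  rw [← conjTranspose_eq_transpose_of_trivial, trace_conjTranspose_mul_eq_sum_inner _ _ b,
    Finset.mul_sum]
  refine Finset.sum_le_sum fun i _ => (real_inner_le_norm _ _).trans ?_
  gcongr
  simpa using norm_toEuclideanLin_apply_le A (b i)

theorem nuclearNorm_eq_trace_cfc_sqrt (Y : Matrix (Fin n) (Fin n) ℝ) :
    nuclearNorm Y = (cfc Real.sqrt (Yᴴ * Y)).trace := by
  rw [(posSemidef_conjTranspose_mul_self Y).isHermitian.cfc_eq, IsHermitian.cfc,
    Unitary.conjStarAlgAut_apply, RCLike.ofReal_real_eq_id]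
  rfl

theorem nuclearNorm_eq_sum_sqrt_eigenvalues (Y : Matrix (Fin n) (Fin n) ℝ) :
    nuclearNorm Y = ∑ i, √((posSemidef_conjTranspose_mul_self Y).isHermitian.eigenvalues i) := by
  rw [nuclearNorm_eq_trace_cfc_sqrt, IsHermitian.trace_cfc]
  rfl

theorem nuclearNorm_nonneg (Y : Matrix (Fin n) (Fin n) ℝ) : 0 ≤ nuclearNorm Y := by
  rw [nuclearNorm_eq_sum_sqrt_eigenvalues]
  positivity

theorem trace_transpose_mul_le_specNorm_mul_nuclearNorm (A Y : Matrix (Fin n) (Fin n) ℝ) :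
    (Aᵀ * Y).trace ≤ specNorm A * nuclearNorm Y := by
  convert trace_transpose_mul_le_specNorm_mul A Y
    (posSemidef_conjTranspose_mul_self Y).isHermitian.eigenvectorBasis using 2
  rw [nuclearNorm_eq_sum_sqrt_eigenvalues]
  simp only [norm_toEuclideanLin_eigenvectorBasis_conjTranspose_mul_self]

theorem Matrix.PosSemidef.nuclearNorm_eq_trace {A : Matrix (Fin n) (Fin n) ℝ}
    (hA : A.PosSemidef) : nuclearNorm A = A.trace := by
  rw [nuclearNorm_eq_trace_cfc_sqrt, hA.isHermitian.eq, ← sq, hA.cfc_sqrt_sq]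

theorem specNorm_add_le_one {C W : Matrix (Fin n) (Fin n) ℝ} (hC : C.IsSymm) (hCC : C * C = C)
    (hCW : C * W = 0) (hWC : W * C = 0) (hW : specNorm W ≤ 1) : specNorm (C + W) ≤ 1 := by
  have hP : (toEuclideanLin C).IsSymmetric := by
    rw [isSymmetric_toEuclideanLin_iff, IsHermitian, conjTranspose_eq_transpose_of_trivial, hC.eq]
  have comp_apply (A B : Matrix (Fin n) (Fin n) ℝ) x :
      toEuclideanLin A (toEuclideanLin B x) = toEuclideanLin (A * B) x := by
    rw [toLpLin_mul_same, LinearMap.comp_apply]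
  refine ContinuousLinearMap.opNorm_le_bound _ zero_le_one fun x => ?_
  rw [one_mul, LinearMap.coe_toContinuousLinearMap', map_add]
  refine hP.norm_add_apply_le (fun x => by rw [comp_apply, hCC])
    (fun x => by rw [comp_apply, hCW, map_zero, LinearMap.zero_apply])
    (fun x => by rw [comp_apply, hWC, map_zero, LinearMap.zero_apply]) (fun x => ?_) x
  simpa using (norm_toEuclideanLin_apply_le W x).trans (mul_le_of_le_one_left (norm_nonneg x) hW)

end NuclearNorm

/-- **Nuclear norm subgradient inequality with certificate.** If `C` is the orthogonal
projection onto the column space of the PSD matrix `Y*` (symmetric idempotent with the same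
range) and `‖W‖ ≤ 1` with `P_T(W) = CW + WC − CWC = 0`, then for every `Y`,
`‖Y‖_* − ‖Y*‖_* ≥ ⟨C + W, Y − Y*⟩`. -/
theorem nuclear_norm_subgradient {n : ℕ}
    (Ystar C W : Matrix (Fin n) (Fin n) ℝ)
    (hpsd : Ystar.PosSemidef)
    (hCsymm : C.IsSymm) (hCidem : C * C = C)
    (hCrange : LinearMap.range C.mulVecLin = LinearMap.range Ystar.mulVecLin)
    (hW : specNorm W ≤ 1)
    (hWT : C * W + W * C - C * W * C = 0) :
    ∀ Y : Matrix (Fin n) (Fin n) ℝ,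
      nuclearNorm Y - nuclearNorm Ystar ≥
        ∑ i, ∑ j, (C + W) i j * (Y - Ystar) i j := by
  intro Y
  obtain ⟨hCW, hWC⟩ := IsIdempotentElem.mul_eq_zero_and_mul_eq_zero hCidem hWT
  have hCY : C * Ystar = Ystar := mul_eq_self_of_range_le hCidem hCrange.ge
  have hWY : Wᵀ * Ystar = 0 := by
    rw [← hCY, ← Matrix.mul_assoc, ← hCsymm.eq, ← transpose_mul, hCW, transpose_zero, zero_mul]
  have h_Ystar : ((C + W)ᵀ * Ystar).trace = nuclearNorm Ystar := by
    rw [transpose_add, hCsymm.eq, add_mul, hCY, hWY, add_zero, hpsd.nuclearNorm_eq_trace]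
  have h_Y : ((C + W)ᵀ * Y).trace ≤ nuclearNorm Y :=
    (trace_transpose_mul_le_specNorm_mul_nuclearNorm _ Y).trans <|
      mul_le_of_le_one_left (nuclearNorm_nonneg Y) (specNorm_add_le_one hCsymm hCidem hCW hWC hW)
  rw [ge_iff_le, sum_sum_mul_eq_trace_transpose_mul, Matrix.mul_sub, trace_sub, h_Ystar]
  linarith
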